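/- Let E ∈ ℂ^{n×n} be Hermitian, F ∈ ℂ^{m×n}, G ∈ ℂ^{m×m}, q ∈ ℂⁿ, r ∈ ℂᵐ, and let û ∈ ℂⁿ, p̂ ∈ ℂᵐ. Fix positive weights α₁, α₂, α₃, β₁, β₂. Set Q = q − Eû − F*p̂ and R = r − Fû − Gp̂. Define Ŷ₁ = [[α₁⁻¹(ℜ(û)ᵀ⊗Iₙ)J_S^n D_{S,n}⁻¹, −α₁⁻¹(ℑ(û)ᵀ⊗Iₙ)J_SK^n D_{SK,n}⁻¹, α₂⁻¹(Iₙ⊗ℜ(p̂)ᵀ), α₂⁻¹(Iₙ⊗ℑ(p̂)ᵀ)],[α₁⁻¹(ℑ(û)ᵀ⊗Iₙ)J_S^n D_{S,n}⁻¹, α₁⁻¹(ℜ(û)ᵀ⊗Iₙ)J_SK^n D_{SK,n}⁻¹, α₂⁻¹(Iₙ⊗ℑ(p̂)ᵀ), −α₂⁻¹(Iₙ⊗ℜ(p̂)ᵀ)]], Ŷ₂ = [[α₂⁻¹(ℜ(û)ᵀ⊗I_m), −α₂⁻¹(ℑ(û)ᵀ⊗I_m), α₃⁻¹(ℜ(p̂)ᵀ⊗I_m),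 −α₃⁻¹(ℑ(p̂)ᵀ⊗I_m)],[α₂⁻¹(ℑ(û)ᵀ⊗I_m), α₂⁻¹(ℜ(û)ᵀ⊗I_m), α₃⁻¹(ℑ(p̂)ᵀ⊗I_m), α₃⁻¹(ℜ(p̂)ᵀ⊗I_m)]], Y₁ = [Ŷ₁, 0_{2n×2m²}], Y₂ = [0_{2m×n²}, Ŷ₂], I₁ = [−β₁⁻¹I_{2n}, 0_{2n×2m}], I₂ = [0_{2m×2n}, −β₂⁻¹I_{2m}], and M = [[Y₁, I₁],[Y₂, I₂]]. Then MMᵀ is invertible, and the structured backward error without sparsity ξ^{G₁}(û,p̂) := inf{ ζ^{σ₁}(ΔE, ΔF, ΔG, Δq, Δr) : ΔE ∈ ℂ^{n×n} Hermitian, ΔF ∈ ℂ^{m×n}, ΔG ∈ ℂ^{m×m}, Δq ∈ ℂⁿ, Δr ∈ ℂᵐ, (E+ΔE)û + (F+ΔF)*p̂ = q+Δq and (F+ΔF)û + (G+ΔG)p̂ = r+Δr } is attained and equals ‖Mᵀ(MMᵀ)⁻¹[ℜ(Q); ℑ(Q); ℜ(R); ℑ(R)]‖₂. -/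

import Mathlib

open Matrix

noncomputable section

namespace GSPPBE

/-- Entrywise real part of a complex matrix. -/
def reM {I J : Type*} (A : Matrix I J ℂ) : Matrix I J ℝ := A.map Complex.re

/-- Entrywise imaginary part of a complex matrix. -/
def imM {I J : Type*} (A : Matrix I J ℂ) : Matrix I J ℝ := A.map Complex.im

/-- Entrywise real part of a complex vector. -/
def reV {I : Type*} (v : I → ℂ) : I → ℝ := fun i => (v i).re

/-- Entrywise imaginary part of a complex vector. -/
def imV {I : Type*} (v : I → ℂ) : I → ℝ := fun i => (v i).im

/-- Frobenius norm of a matrix. -/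
def frob {I J α : Type*} [Fintype I] [Fintype J] [SeminormedAddGroup α]
    (A : Matrix I J α) : ℝ :=
  Real.sqrt (∑ i, ∑ j, ‖A i j‖ ^ 2)

/-- Euclidean norm of a (finitely indexed) vector. -/
def eunorm {I α : Type*} [Fintype I] [SeminormedAddGroup α] (v : I → α) : ℝ :=
  Real.sqrt (∑ i, ‖v i‖ ^ 2)

/-- Column-major vectorization: `vecM A (j, i) = A i j`. -/
def vecM {I J α : Type*} (A : Matrix I J α) : J × I → α := fun p => A p.2 p.1

/-- Index type for the lower triangle including the diagonal (positions of `vec_S`);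
it has `m(m+1)/2` elements. -/
abbrev SymIdx (m : ℕ) := {p : Fin m × Fin m // p.2 ≤ p.1}

/-- Index type for the strictly lower triangle (positions of `vec_SK`);
it has `m(m-1)/2` elements. -/
abbrev SkewIdx (m : ℕ) := {p : Fin m × Fin m // p.2 < p.1}

/-- `vec_S` of a (symmetric) matrix: its lower-triangular entries `Z i j`, `j ≤ i`. -/
def vecS {m : ℕ} {α : Type*} (Z : Matrix (Fin m) (Fin m) α) : SymIdx m → α :=
  fun p => Z p.1.1 p.1.2

/-- `vec_SK` of a (skew-symmetric) matrix: its strictly lower-triangular entries `Z i j`, `j < i`. -/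
def vecSK {m : ℕ} {α : Type*} (Z : Matrix (Fin m) (Fin m) α) : SkewIdx m → α :=
  fun p => Z p.1.1 p.1.2

/-- `J_S^m`: its column at position `(i,j)`, `j ≤ i`, is `vec(eᵢeⱼᵀ + eⱼeᵢᵀ)` for `i > j` and
`vec(eⱼeⱼᵀ)` for `i = j`.  Rows are vec positions `(column, row)`. -/
def JS (m : ℕ) : Matrix (Fin m × Fin m) (SymIdx m) ℝ :=
  Matrix.of fun cr p =>
    (if cr.2 = p.1.1 ∧ cr.1 = p.1.2 then (1 : ℝ) else 0) +
    (if p.1.1 ≠ p.1.2 ∧ cr.2 = p.1.2 ∧ cr.1 = p.1.1 then 1 else 0)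

/-- `J_SK^m`: its column at position `(i,j)`, `j < i`, is `vec(eᵢeⱼᵀ − eⱼeᵢᵀ)`. -/
def JSK (m : ℕ) : Matrix (Fin m × Fin m) (SkewIdx m) ℝ :=
  Matrix.of fun cr p =>
    (if cr.2 = p.1.1 ∧ cr.1 = p.1.2 then (1 : ℝ) else 0) -
    (if cr.2 = p.1.2 ∧ cr.1 = p.1.1 then 1 else 0)

open Classical in
/-- Sign pattern `Θ_X` of a matrix, with values in the same ring. -/
def theta {I J α : Type*} [Zero α] [One α] (X : Matrix I J α) : Matrix I J α :=
  Matrix.of fun i j => if X i j = 0 then 0 else 1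

open Classical in
/-- Real-valued sign pattern `Θ_X` of a matrix. -/
def thetaR {I J α : Type*} [Zero α] (X : Matrix I J α) : Matrix I J ℝ :=
  Matrix.of fun i j => if X i j = 0 then 0 else 1

/-- `Φ_X = diag(vec_S(Θ_X))`. -/
def Phi {m : ℕ} {α : Type*} [Zero α] (X : Matrix (Fin m) (Fin m) α) :
    Matrix (SymIdx m) (SymIdx m) ℝ :=
  Matrix.diagonal (vecS (thetaR X))

/-- `Ψ_X`: diagonal matrix listing the strictly lower-triangular entries of `Θ_X`
in `vec_SK` ordering. -/
def Psi {m : ℕ} {α : Type*} [Zero α] (X : Matrix (Fin m) (Fin m) α) :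
    Matrix (SkewIdx m) (SkewIdx m) ℝ :=
  Matrix.diagonal (vecSK (thetaR X))

/-- `Σ_X = diag(vec(Θ_X))`. -/
def Sig {I J α : Type*} [DecidableEq I] [DecidableEq J] [Zero α]
    (X : Matrix I J α) : Matrix (J × I) (J × I) ℝ :=
  Matrix.diagonal (vecM (thetaR X))

/-- `D_{S,m}`: diagonal entry `1` at the positions of diagonal entries `(j,j)`, `√2` elsewhere. -/
def DS (m : ℕ) : Matrix (SymIdx m) (SymIdx m) ℝ :=
  Matrix.diagonal fun p => if p.1.1 = p.1.2 then 1 else Real.sqrt 2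

/-- `D_{SK,m} = √2·I`. -/
def DSK (m : ℕ) : Matrix (SkewIdx m) (SkewIdx m) ℝ :=
  Matrix.diagonal fun _ => Real.sqrt 2

/-- `uᵀ ⊗ I_b`, viewed as a matrix acting on column-major vectorizations of `b×a` matrices. -/
def rowKronId {a b : ℕ} (u : Fin a → ℝ) : Matrix (Fin b) (Fin a × Fin b) ℝ :=
  Matrix.of fun r p => u p.1 * (if r = p.2 then 1 else 0)

/-- `I_a ⊗ vᵀ`, viewed as a matrix acting on column-major vectorizations of `b×a` matrices. -/
def idKronRow {a b : ℕ} (v : Fin b → ℝ) : Matrix (Fin a) (Fin a × Fin b) ℝ :=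
  Matrix.of fun r p => (if r = p.1 then 1 else 0) * v p.2

/-- The weighted norm `ζ^{σ₁}(A,B,C,q,r)`. -/
def zeta1 {n m : ℕ} {α : Type*} [SeminormedAddGroup α]
    (α₁ α₂ α₃ β₁ β₂ : ℝ)
    (A : Matrix (Fin n) (Fin n) α) (B : Matrix (Fin m) (Fin n) α)
    (C : Matrix (Fin m) (Fin m) α) (q : Fin n → α) (r : Fin m → α) : ℝ :=
  Real.sqrt (α₁ ^ 2 * frob A ^ 2 + α₂ ^ 2 * frob B ^ 2 + α₃ ^ 2 * frob C ^ 2 +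
    β₁ ^ 2 * eunorm q ^ 2 + β₂ ^ 2 * eunorm r ^ 2)

/-- The weighted norm `ζ^{σ₂}(A,B,H,C,q,r)`. -/
def zeta2 {n m : ℕ} {α : Type*} [SeminormedAddGroup α]
    (α₁ α₂ α₃ α₄ β₁ β₂ : ℝ)
    (A : Matrix (Fin n) (Fin n) α) (B : Matrix (Fin m) (Fin n) α)
    (H : Matrix (Fin m) (Fin n) α) (C : Matrix (Fin m) (Fin m) α)
    (q : Fin n → α) (r : Fin m → α) : ℝ :=
  Real.sqrt (α₁ ^ 2 * frob A ^ 2 + α₂ ^ 2 * frob B ^ 2 + α₃ ^ 2 * frob H ^ 2 +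
    α₄ ^ 2 * frob C ^ 2 + β₁ ^ 2 * eunorm q ^ 2 + β₂ ^ 2 * eunorm r ^ 2)


/-!
Split every complex quantity into real and imaginary parts. A Hermitian `ΔE` is determined by
`vec_S(ℜ ΔE)` and `vec_SK(ℑ ΔE)`, and scaling these by `D_S`, `D_SK` (off-diagonal entries occur
twice in `ΔE`) turns `‖ΔE‖_F` into a Euclidean norm. So the weighted real coordinates `x` of a
perturbation range over all of a real vector space, `‖x‖₂ = ζ^{σ₁}`, and the two constraints
become the real linear system `M x = [ℜ Q; ℑ Q; ℜ R; ℑ R]`. The blocks `-β₁⁻¹ I`, `-β₂⁻¹ I` give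
`M` full row rank, so `M Mᵀ` is invertible and the least-norm solution `Mᵀ (M Mᵀ)⁻¹ w` attains
the infimum.
-/

lemma mul_inv_mulVec_mulVec {ι κ R : Type*} [Fintype κ] [DecidableEq κ] [CommRing R]
    (B : Matrix ι κ R) {D : Matrix κ κ R} (hD : IsUnit D) (v : κ → R) :
    (B * D⁻¹) *ᵥ (D *ᵥ v) = B *ᵥ v := by
  rw [mulVec_mulVec, Matrix.mul_assoc, nonsing_inv_mul _ ((isUnit_iff_isUnit_det _).mp hD),
    Matrix.mul_one]

lemma mulVec_nonsing_inv_mulVec {κ R : Type*} [Fintype κ] [DecidableEq κ] [CommRing R]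
    {D : Matrix κ κ R} (hD : IsUnit D) (v : κ → R) : D *ᵥ (D⁻¹ *ᵥ v) = v := by
  rw [mulVec_mulVec, mul_nonsing_inv _ ((isUnit_iff_isUnit_det _).mp hD), one_mulVec]

section MinimumNorm

variable {ι κ : Type*} [Fintype ι] [Fintype κ]

lemma eunorm_eq_sqrt_dotProduct (v : κ → ℝ) : eunorm v = √(v ⬝ᵥ v) := by
  simp only [eunorm, dotProduct, Real.norm_eq_abs, sq, abs_mul_abs_self]

lemma isUnit_fromCols_mul_transpose {κ' : Type*} [Fintype κ'] [DecidableEq ι]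
    (A : Matrix ι κ' ℝ) {B : Matrix ι ι ℝ} (hB : IsUnit B) :
    IsUnit (fromCols A B * (fromCols A B)ᵀ) := by
  have hinj : Function.Injective (fromCols A B).vecMul := fun v v' h => by
    change v ᵥ* _ = v' ᵥ* _ at h
    rw [vecMul_fromCols, vecMul_fromCols, Sum.elim_eq_iff] at h
    exact vecMul_injective_iff_isUnit.mpr hB h.2
  simpa [conjTranspose_eq_transpose_of_trivial] using
    (PosDef.mul_conjTranspose_self _ hinj).isUnit

variable [DecidableEq ι] (M : Matrix ι κ ℝ) (w : ι → ℝ)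

lemma mulVec_transpose_mul_nonsing_inv_mulVec (hM : IsUnit (M * Mᵀ)) :
    M *ᵥ ((Mᵀ * (M * Mᵀ)⁻¹) *ᵥ w) = w := by
  rw [← mulVec_mulVec, mulVec_mulVec, mulVec_nonsing_inv_mulVec hM]

/-- `x₀ = Mᵀ (M Mᵀ)⁻¹ w` lies in the row space of `M`, hence is orthogonal to every `y - x₀`
with `M y = w`; Pythagoras then gives `‖x₀‖ ≤ ‖y‖`. -/
lemma isLeast_eunorm_of_mulVec_eq (hM : IsUnit (M * Mᵀ)) :
    IsLeast (eunorm '' {y | M *ᵥ y = w}) (eunorm ((Mᵀ * (M * Mᵀ)⁻¹) *ᵥ w)) := by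
  refine ⟨⟨_, mulVec_transpose_mul_nonsing_inv_mulVec M w hM, rfl⟩, ?_⟩
  rintro _ ⟨y, hy : M *ᵥ y = w, rfl⟩
  set x₀ := (Mᵀ * (M * Mᵀ)⁻¹) *ᵥ w with hx₀
  have hker : M *ᵥ (y - x₀) = 0 := by
    rw [mulVec_sub, hy, mulVec_transpose_mul_nonsing_inv_mulVec M w hM, sub_self]
  have horth : x₀ ⬝ᵥ (y - x₀) = 0 := by
    generalize y - x₀ = z at hker
    rw [hx₀, ← mulVec_mulVec, mulVec_transpose, ← dotProduct_mulVec, hker, dotProduct_zero]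
  have hpyth : y ⬝ᵥ y = x₀ ⬝ᵥ x₀ + (y - x₀) ⬝ᵥ (y - x₀) := by
    conv_lhs => rw [← add_sub_cancel x₀ y]
    rw [add_dotProduct, dotProduct_add, dotProduct_add, horth, dotProduct_comm (y - x₀), horth]
    ring
  have hnonneg : 0 ≤ (y - x₀) ⬝ᵥ (y - x₀) := by
    simpa using dotProduct_self_star_nonneg (y - x₀)
  rw [eunorm_eq_sqrt_dotProduct, eunorm_eq_sqrt_dotProduct]
  exact Real.sqrt_le_sqrt (by linarith)

end MinimumNorm

def realify {ι : Type*} (v : ι → ℂ) : ι ⊕ ι → ℝ := Sum.elim (reV v) (imV v)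

lemma realify_injective {ι : Type*} : Function.Injective (realify (ι := ι)) := fun v v' h => by
  rw [realify, realify, Sum.elim_eq_iff] at h
  exact funext fun i => Complex.ext (congrFun h.1 i) (congrFun h.2 i)

section Norms

variable {ι κ : Type*} [Fintype ι] [Fintype κ]

lemma eunorm_sq {α : Type*} [SeminormedAddGroup α] (v : ι → α) :
    eunorm v ^ 2 = ∑ i, ‖v i‖ ^ 2 :=
  Real.sq_sqrt (by positivity)

lemma frob_sq {α : Type*} [SeminormedAddGroup α] (A : Matrix ι κ α) :
    frob A ^ 2 = ∑ i, ∑ j, ‖A i j‖ ^ 2 :=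
  Real.sq_sqrt (by positivity)

lemma eunorm_sumElim_sq {α : Type*} [SeminormedAddGroup α] (v : ι → α) (v' : κ → α) :
    eunorm (Sum.elim v v') ^ 2 = eunorm v ^ 2 + eunorm v' ^ 2 := by
  simp only [eunorm_sq, Fintype.sum_sum_type, Sum.elim_inl, Sum.elim_inr]

lemma eunorm_smul_sq (c : ℝ) (v : ι → ℝ) : eunorm (c • v) ^ 2 = c ^ 2 * eunorm v ^ 2 := by
  simp only [eunorm_sq, Pi.smul_apply, smul_eq_mul, norm_mul, mul_pow, Real.norm_eq_abs, sq_abs,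
    Finset.mul_sum]

lemma eunorm_vecM {α : Type*} [SeminormedAddGroup α] (A : Matrix ι κ α) :
    eunorm (vecM A) = frob A := by
  rw [eunorm, frob, Fintype.sum_prod_type, Finset.sum_comm]
  rfl

lemma norm_sq_eq_re_sq_add_im_sq (z : ℂ) : ‖z‖ ^ 2 = z.re ^ 2 + z.im ^ 2 := by
  rw [Complex.sq_norm, Complex.normSq_apply]
  ring

lemma eunorm_realify_sq (v : ι → ℂ) : eunorm (realify v) ^ 2 = eunorm v ^ 2 := by
  rw [realify, eunorm_sumElim_sq, eunorm_sq, eunorm_sq, eunorm_sq, ← Finset.sum_add_distrib]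
  simp only [reV, imV, Real.norm_eq_abs, sq_abs, norm_sq_eq_re_sq_add_im_sq]

lemma frob_sq_eq_reM_add_imM (A : Matrix ι κ ℂ) :
    frob A ^ 2 = frob (reM A) ^ 2 + frob (imM A) ^ 2 := by
  simp only [frob_sq, reM, imM, map_apply, Real.norm_eq_abs, sq_abs,
    norm_sq_eq_re_sq_add_im_sq, Finset.sum_add_distrib]

end Norms

section Triangles

variable {k : ℕ}

lemma sum_symIdx {M : Type*} [AddCommMonoid M] (f : Fin k × Fin k → M) :
    ∑ p : SymIdx k, f p.1 = ∑ q, if q.2 ≤ q.1 then f q else 0 := by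
  rw [← Finset.sum_filter]
  exact (Finset.sum_subtype _ (by simp) f).symm

lemma sum_skewIdx {M : Type*} [AddCommMonoid M] (f : Fin k × Fin k → M) :
    ∑ p : SkewIdx k, f p.1 = ∑ q, if q.2 < q.1 then f q else 0 := by
  rw [← Finset.sum_filter]
  exact (Finset.sum_subtype _ (by simp) f).symm

lemma sum_eq_of_symm {M : Type*} [AddCommMonoid M] (f : Fin k × Fin k → M)
    (hf : ∀ q, f q.swap = f q) :
    ∑ q, f q = (∑ q, if q.2 ≤ q.1 then f q else 0) + ∑ q, if q.2 < q.1 then f q else 0 := by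
  have hupper : (∑ q : Fin k × Fin k, if q.1 < q.2 then f q else 0)
      = ∑ q, if q.2 < q.1 then f q else 0 := by
    rw [← (Equiv.prodComm (Fin k) (Fin k)).sum_comp]
    simp only [Equiv.prodComm_apply, Prod.fst_swap, Prod.snd_swap, hf]
  rw [← hupper, ← Finset.sum_add_distrib]
  refine Finset.sum_congr rfl fun q _ => ?_
  by_cases h : q.2 ≤ q.1
  · simp [h, not_lt.mpr h]
  · simp [h, not_le.mp h]

lemma frob_sq_eq_of_isSymm {S : Matrix (Fin k) (Fin k) ℝ} (hS : S.IsSymm) :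
    frob S ^ 2 = eunorm (DS k *ᵥ vecS S) ^ 2 := by
  have h2 : √2 ^ 2 = 2 := Real.sq_sqrt zero_le_two
  rw [frob_sq, ← Fintype.sum_prod_type', eunorm_sq, DS]
  simp only [mulVec_diagonal, vecS, Real.norm_eq_abs, sq_abs]
  rw [sum_eq_of_symm _ fun q => by rw [← hS.apply]; rfl,
    sum_symIdx (fun q => ((if q.1 = q.2 then 1 else √2) * S q.1 q.2) ^ 2),
    ← Finset.sum_add_distrib]
  refine Finset.sum_congr rfl fun q _ => ?_
  by_cases hle : q.2 ≤ q.1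
  · by_cases hdiag : q.1 = q.2
    · simp [hdiag]
    · simp only [hle, hdiag, lt_of_le_of_ne hle (Ne.symm hdiag), ↓reduceIte, mul_pow, h2]
      ring
  · simp [hle, not_lt.mpr (le_of_not_ge hle)]

lemma frob_sq_eq_of_transpose_eq_neg {K : Matrix (Fin k) (Fin k) ℝ} (hK : Kᵀ = -K) :
    frob K ^ 2 = eunorm (DSK k *ᵥ vecSK K) ^ 2 := by
  have h2 : √2 ^ 2 = 2 := Real.sq_sqrt zero_le_two
  have hdiag : ∀ i, K i i = 0 := fun i => by
    have := congrFun (congrFun hK i) i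
    simp only [transpose_apply, Matrix.neg_apply] at this
    linarith
  rw [frob_sq, ← Fintype.sum_prod_type', eunorm_sq, DSK]
  simp only [mulVec_diagonal, vecSK, Real.norm_eq_abs, sq_abs]
  rw [sum_eq_of_symm _ fun q => by
      rw [Prod.fst_swap, Prod.snd_swap, ← transpose_apply K q.1 q.2, hK, Matrix.neg_apply, neg_sq],
    sum_skewIdx (fun q => (√2 * K q.1 q.2) ^ 2), ← Finset.sum_add_distrib]
  refine Finset.sum_congr rfl fun q _ => ?_
  by_cases hlt : q.2 < q.1
  · simp only [hlt, hlt.le, ↓reduceIte, mul_pow, h2]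
    ring
  · by_cases hle : q.2 ≤ q.1
    · obtain ⟨i, j⟩ := q
      obtain rfl : j = i := le_antisymm hle (not_lt.mp hlt)
      simp [hdiag]
    · simp [hle, hlt]

end Triangles

section ComplexParts

variable {ι κ : Type*}

lemma reM_conjTranspose (A : Matrix ι κ ℂ) : reM Aᴴ = (reM A)ᵀ := by
  ext; simp [reM]

lemma imM_conjTranspose (A : Matrix ι κ ℂ) : imM Aᴴ = -(imM A)ᵀ := by
  ext; simp [imM]

lemma isSymm_reM_of_isHermitian {A : Matrix ι ι ℂ} (hA : A.IsHermitian) : (reM A).IsSymm := by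
  rw [IsSymm, ← reM_conjTranspose, hA.eq]

lemma transpose_imM_of_isHermitian {A : Matrix ι ι ℂ} (hA : A.IsHermitian) :
    (imM A)ᵀ = -imM A := by
  rw [← neg_neg (imM A)ᵀ, ← imM_conjTranspose, hA.eq]

lemma reV_sub (v w : ι → ℂ) : reV (v - w) = reV v - reV w := rfl
lemma imV_sub (v w : ι → ℂ) : imV (v - w) = imV v - imV w := rfl
lemma reV_add (v w : ι → ℂ) : reV (v + w) = reV v + reV w := rfl
lemma imV_add (v w : ι → ℂ) : imV (v + w) = imV v + imV w := rfl

variable [Fintype κ] (A : Matrix ι κ ℂ) (v : κ → ℂ)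

lemma reV_mulVec : reV (A *ᵥ v) = reM A *ᵥ reV v - imM A *ᵥ imV v := by
  ext i; simp [reV, imV, reM, imM, mulVec, dotProduct, Complex.re_sum]

lemma imV_mulVec : imV (A *ᵥ v) = reM A *ᵥ imV v + imM A *ᵥ reV v := by
  ext i; simp [reV, imV, reM, imM, mulVec, dotProduct, Complex.im_sum, Finset.sum_add_distrib]

end ComplexParts

lemma frob_sq_of_isHermitian {k : ℕ} {A : Matrix (Fin k) (Fin k) ℂ} (hA : A.IsHermitian) :
    frob A ^ 2 = eunorm (DS k *ᵥ vecS (reM A)) ^ 2 + eunorm (DSK k *ᵥ vecSK (imM A)) ^ 2 := by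
  rw [frob_sq_eq_reM_add_imM, frob_sq_eq_of_isSymm (isSymm_reM_of_isHermitian hA),
    frob_sq_eq_of_transpose_eq_neg (transpose_imM_of_isHermitian hA)]

lemma exists_isHermitian_vecS_reM_vecSK_imM {k : ℕ} (s : SymIdx k → ℝ) (t : SkewIdx k → ℝ) :
    ∃ A : Matrix (Fin k) (Fin k) ℂ, A.IsHermitian ∧ vecS (reM A) = s ∧ vecSK (imM A) = t := by
  let c : Fin k → Fin k → ℂ := fun i j =>
    ⟨if h : j ≤ i then s ⟨(i, j), h⟩ else 0, if h : j < i then t ⟨(i, j), h⟩ else 0⟩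
  refine ⟨of fun i j => if j ≤ i then c i j else star (c j i), ?_, ?_, ?_⟩
  · refine IsHermitian.ext fun i j => ?_
    rcases lt_trichotomy i j with h | rfl | h
    · simp [h.le, not_le.mpr h]
    · apply Complex.ext <;> simp [c]
    · simp [h.le, not_le.mpr h]
  · ext p
    simp [vecS, reM, c, p.2]
  · ext p
    simp [vecSK, imM, c, p.2, p.2.le]

section Vectorization

variable {a b k : ℕ}

lemma rowKronId_mulVec_vecM (u : Fin a → ℝ) (A : Matrix (Fin b) (Fin a) ℝ) :
    rowKronId u *ᵥ vecM A = A *ᵥ u := by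
  ext r
  simp [rowKronId, vecM, mulVec, dotProduct, Fintype.sum_prod_type, mul_comm]

lemma idKronRow_mulVec_vecM (v : Fin b → ℝ) (A : Matrix (Fin b) (Fin a) ℝ) :
    idKronRow v *ᵥ vecM A = Aᵀ *ᵥ v := by
  ext r
  simp [idKronRow, vecM, mulVec, dotProduct, Fintype.sum_prod_type, mul_comm]

lemma JS_mulVec_vecS {S : Matrix (Fin k) (Fin k) ℝ} (hS : S.IsSymm) :
    JS k *ᵥ vecS S = vecM S := by
  ext ⟨c, r⟩
  have hterm : ∀ q : Fin k × Fin k, (if q.2 ≤ q.1 then ((if r = q.1 ∧ c = q.2 then (1 : ℝ) else 0) +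
      (if q.1 ≠ q.2 ∧ r = q.2 ∧ c = q.1 then 1 else 0)) * S q.1 q.2 else 0) =
      (if q = (r, c) then (if c ≤ r then S r c else 0) else 0) +
        (if q = (c, r) then (if r < c then S c r else 0) else 0) := by
    rintro ⟨i, j⟩
    simp only [Prod.mk.injEq]
    split_ifs <;> grind
  simp only [mulVec, dotProduct, JS, vecS, of_apply]
  rw [sum_symIdx (fun q => ((if r = q.1 ∧ c = q.2 then (1 : ℝ) else 0) +
    (if q.1 ≠ q.2 ∧ r = q.2 ∧ c = q.1 then 1 else 0)) * S q.1 q.2)]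
  simp only [hterm, Finset.sum_add_distrib, Finset.sum_ite_eq', Finset.mem_univ, if_true, vecM]
  rcases le_or_gt c r with h | h
  · simp [h, not_lt.mpr h]
  · simp [h, not_le.mpr h, hS.apply]

lemma JSK_mulVec_vecSK {K : Matrix (Fin k) (Fin k) ℝ} (hK : Kᵀ = -K) :
    JSK k *ᵥ vecSK K = vecM K := by
  ext ⟨c, r⟩
  have hterm : ∀ q : Fin k × Fin k, (if q.2 < q.1 then ((if r = q.1 ∧ c = q.2 then (1 : ℝ) else 0) -
      (if r = q.2 ∧ c = q.1 then 1 else 0)) * K q.1 q.2 else 0) =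
      (if q = (r, c) then (if c < r then K r c else 0) else 0) -
        (if q = (c, r) then (if r < c then K c r else 0) else 0) := by
    rintro ⟨i, j⟩
    simp only [Prod.mk.injEq]
    split_ifs <;> grind
  simp only [mulVec, dotProduct, JSK, vecSK, of_apply]
  rw [sum_skewIdx (fun q => ((if r = q.1 ∧ c = q.2 then (1 : ℝ) else 0) -
    (if r = q.2 ∧ c = q.1 then 1 else 0)) * K q.1 q.2)]
  simp only [hterm, Finset.sum_sub_distrib, Finset.sum_ite_eq', Finset.mem_univ, if_true, vecM]
  have hKrc : K c r = -K r c := by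
    rw [← transpose_apply K r c, hK, Matrix.neg_apply]
  rcases lt_trichotomy c r with h | rfl | h
  · simp [h, not_lt.mpr h.le]
  · simp only [lt_irrefl, if_false, sub_zero]
    linarith
  · simp [h, not_lt.mpr h.le, hKrc]

end Vectorization

lemma isUnit_DS (k : ℕ) : IsUnit (DS k) :=
  isUnit_diagonal.mpr <| Pi.isUnit_iff.mpr fun p => isUnit_iff_ne_zero.mpr <| by
    split_ifs <;> positivity

lemma isUnit_DSK (k : ℕ) : IsUnit (DSK k) :=
  isUnit_diagonal.mpr <| Pi.isUnit_iff.mpr fun _ => isUnit_iff_ne_zero.mpr <| by positivity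

/-- As in `constraintMatrix`, the product here elaborates with the `CStarMatrix` multiplication
instance; it is definitionally, not syntactically, the `Matrix` product. -/
lemma smul_rowKronId_JS_mulVec {k : ℕ} (c d : ℝ) (u : Fin k → ℝ) {S : Matrix (Fin k) (Fin k) ℝ}
    (hS : S.IsSymm) :
    (c • (rowKronId u * (JS k * (DS k)⁻¹))) *ᵥ (d • (DS k *ᵥ vecS S)) = (c * d) • (S *ᵥ u) := by
  have h : ((rowKronId u : Matrix (Fin k) (Fin k × Fin k) ℝ) * (JS k * (DS k)⁻¹)) *ᵥ
      (DS k *ᵥ vecS S) = S *ᵥ u := by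
    rw [← mulVec_mulVec, mul_inv_mulVec_mulVec _ (isUnit_DS k), JS_mulVec_vecS hS,
      rowKronId_mulVec_vecM]
  rw [smul_mulVec, mulVec_smul, smul_smul]
  exact congrArg _ h

lemma smul_rowKronId_JSK_mulVec {k : ℕ} (c d : ℝ) (u : Fin k → ℝ)
    {K : Matrix (Fin k) (Fin k) ℝ} (hK : Kᵀ = -K) :
    (c • (rowKronId u * (JSK k * (DSK k)⁻¹))) *ᵥ (d • (DSK k *ᵥ vecSK K)) = (c * d) • (K *ᵥ u) := by
  have h : ((rowKronId u : Matrix (Fin k) (Fin k × Fin k) ℝ) * (JSK k * (DSK k)⁻¹)) *ᵥ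
      (DSK k *ᵥ vecSK K) = K *ᵥ u := by
    rw [← mulVec_mulVec, mul_inv_mulVec_mulVec _ (isUnit_DSK k), JSK_mulVec_vecSK hK,
      rowKronId_mulVec_vecM]
  rw [smul_mulVec, mulVec_smul, smul_smul]
  exact congrArg _ h

lemma exists_vecM_reM_vecM_imM {ι κ : Type*} (a b : κ × ι → ℝ) :
    ∃ A : Matrix ι κ ℂ, vecM (reM A) = a ∧ vecM (imM A) = b :=
  ⟨of fun i j => ⟨a (j, i), b (j, i)⟩, rfl, rfl⟩

lemma realify_surjective {ι : Type*} : Function.Surjective (realify (ι := ι)) := fun y =>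
  ⟨fun i => ⟨y (.inl i), y (.inr i)⟩, by ext (i | i) <;> rfl⟩

lemma add_add_add_eq_add_iff {G : Type*} [AddCommGroup G] (a b c x y z : G) :
    a + x + (b + y) = c + z ↔ x + y - z = c - a - b := by
  constructor <;> intro h <;> rw [← sub_eq_zero] at h ⊢ <;> rw [← h] <;> abel

section BackwardError

variable {n m : ℕ}

/-- The matrix `M` of the theorem, verbatim. -/
def constraintMatrix (n m : ℕ) (uh : Fin n → ℂ) (ph : Fin m → ℂ) (α₁ α₂ α₃ β₁ β₂ : ℝ) :
    Matrix ((Fin n ⊕ Fin n) ⊕ (Fin m ⊕ Fin m))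
      (((SymIdx n ⊕ SkewIdx n) ⊕
        (((Fin n × Fin m) ⊕ (Fin n × Fin m)) ⊕ ((Fin m × Fin m) ⊕ (Fin m × Fin m)))) ⊕
        ((Fin n ⊕ Fin n) ⊕ (Fin m ⊕ Fin m))) ℝ :=
  fromBlocks
    (fromCols
      (fromRows
        (fromCols (α₁⁻¹ • (rowKronId (reV uh) * (JS n * (DS n)⁻¹)))
          ((-(α₁⁻¹)) • (rowKronId (imV uh) * (JSK n * (DSK n)⁻¹))))
        (fromCols (α₁⁻¹ • (rowKronId (imV uh) * (JS n * (DS n)⁻¹)))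
          (α₁⁻¹ • (rowKronId (reV uh) * (JSK n * (DSK n)⁻¹)))))
      (fromCols
        (fromRows
          (fromCols (α₂⁻¹ • idKronRow (reV ph)) (α₂⁻¹ • idKronRow (imV ph)))
          (fromCols (α₂⁻¹ • idKronRow (imV ph)) ((-(α₂⁻¹)) • idKronRow (reV ph))))
        0))
    (fromCols ((-(β₁⁻¹)) • (1 : Matrix (Fin n ⊕ Fin n) (Fin n ⊕ Fin n) ℝ)) 0)
    (fromCols 0
      (fromCols
        (fromRows
          (fromCols (α₂⁻¹ • rowKronId (reV uh)) ((-(α₂⁻¹)) • rowKronId (imV uh)))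
          (fromCols (α₂⁻¹ • rowKronId (imV uh)) (α₂⁻¹ • rowKronId (reV uh))))
        (fromRows
          (fromCols (α₃⁻¹ • rowKronId (reV ph)) ((-(α₃⁻¹)) • rowKronId (imV ph)))
          (fromCols (α₃⁻¹ • rowKronId (imV ph)) (α₃⁻¹ • rowKronId (reV ph))))))
    (fromCols 0 ((-(β₂⁻¹)) • (1 : Matrix (Fin m ⊕ Fin m) (Fin m ⊕ Fin m) ℝ)))

/-- The weighted real coordinates of a perturbation, in the column order of `constraintMatrix`;
`ΔE` is assumed Hermitian, so only `vec_S(ℜ ΔE)` and `vec_SK(ℑ ΔE)` are recorded. -/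
def perturbationVec (α₁ α₂ α₃ β₁ β₂ : ℝ) (ΔE : Matrix (Fin n) (Fin n) ℂ)
    (ΔF : Matrix (Fin m) (Fin n) ℂ) (ΔG : Matrix (Fin m) (Fin m) ℂ) (Δq : Fin n → ℂ)
    (Δr : Fin m → ℂ) :
    ((SymIdx n ⊕ SkewIdx n) ⊕
      (((Fin n × Fin m) ⊕ (Fin n × Fin m)) ⊕ ((Fin m × Fin m) ⊕ (Fin m × Fin m)))) ⊕
      ((Fin n ⊕ Fin n) ⊕ (Fin m ⊕ Fin m)) → ℝ :=
  Sum.elim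
    (Sum.elim
      (Sum.elim (α₁ • (DS n *ᵥ vecS (reM ΔE))) (α₁ • (DSK n *ᵥ vecSK (imM ΔE))))
      (Sum.elim
        (Sum.elim (α₂ • vecM (reM ΔF)) (α₂ • vecM (imM ΔF)))
        (Sum.elim (α₃ • vecM (reM ΔG)) (α₃ • vecM (imM ΔG)))))
    (Sum.elim (β₁ • realify Δq) (β₂ • realify Δr))

variable (uh : Fin n → ℂ) (ph : Fin m → ℂ) {α₁ α₂ α₃ β₁ β₂ : ℝ}

lemma isUnit_constraintMatrix_mul_transpose (α₁ α₂ α₃ : ℝ) (hβ₁ : β₁ ≠ 0) (hβ₂ : β₂ ≠ 0) :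
    IsUnit (constraintMatrix n m uh ph α₁ α₂ α₃ β₁ β₂ *
      (constraintMatrix n m uh ph α₁ α₂ α₃ β₁ β₂)ᵀ) := by
  rw [constraintMatrix, ← fromCols_fromRows_eq_fromBlocks]
  refine isUnit_fromCols_mul_transpose _ ?_
  rw [fromRows_fromCols_eq_fromBlocks, isUnit_iff_isUnit_det, det_fromBlocks_zero₂₁]
  simp [hβ₁, hβ₂, det_neg]

lemma constraintMatrix_mulVec_perturbationVec (hα₁ : α₁ ≠ 0) (hα₂ : α₂ ≠ 0) (hα₃ : α₃ ≠ 0)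
    (hβ₁ : β₁ ≠ 0) (hβ₂ : β₂ ≠ 0) {ΔE : Matrix (Fin n) (Fin n) ℂ} (hE : ΔE.IsHermitian)
    (ΔF : Matrix (Fin m) (Fin n) ℂ) (ΔG : Matrix (Fin m) (Fin m) ℂ) (Δq : Fin n → ℂ)
    (Δr : Fin m → ℂ) :
    constraintMatrix n m uh ph α₁ α₂ α₃ β₁ β₂ *ᵥ perturbationVec α₁ α₂ α₃ β₁ β₂ ΔE ΔF ΔG Δq Δr =
      Sum.elim (realify (ΔE *ᵥ uh + ΔFᴴ *ᵥ ph - Δq)) (realify (ΔF *ᵥ uh + ΔG *ᵥ ph - Δr)) := by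
  have hS := isSymm_reM_of_isHermitian hE
  have hK := transpose_imM_of_isHermitian hE
  simp only [constraintMatrix, perturbationVec, fromBlocks_mulVec, Sum.elim_comp_inl,
    Sum.elim_comp_inr, fromCols_mulVec_sumElim, fromRows_mulVec, zero_mulVec, add_zero, zero_add,
    smul_rowKronId_JS_mulVec _ _ _ hS, smul_rowKronId_JSK_mulVec _ _ _ hK]
  simp only [smul_mulVec, mulVec_smul, smul_smul, rowKronId_mulVec_vecM, idKronRow_mulVec_vecM,
    one_mulVec, neg_mul, inv_mul_cancel₀ hα₁, mul_inv_cancel₀ hα₂, mul_inv_cancel₀ hα₃,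
    mul_inv_cancel₀ hβ₁, mul_inv_cancel₀ hβ₂, neg_smul, one_smul, neg_mulVec, smul_neg]
  simp only [realify, reV_add, reV_sub, imV_add, imV_sub, reV_mulVec, imV_mulVec,
    reM_conjTranspose, imM_conjTranspose, neg_mulVec, ← Sum.elim_add_add, ← Sum.elim_neg_neg,
    Sum.elim_eq_iff]
  refine ⟨⟨?_, ?_⟩, ?_, ?_⟩ <;> abel

lemma eunorm_perturbationVec (α₁ α₂ α₃ β₁ β₂ : ℝ) {ΔE : Matrix (Fin n) (Fin n) ℂ}
    (hE : ΔE.IsHermitian) (ΔF : Matrix (Fin m) (Fin n) ℂ) (ΔG : Matrix (Fin m) (Fin m) ℂ)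
    (Δq : Fin n → ℂ) (Δr : Fin m → ℂ) :
    eunorm (perturbationVec α₁ α₂ α₃ β₁ β₂ ΔE ΔF ΔG Δq Δr) =
      zeta1 α₁ α₂ α₃ β₁ β₂ ΔE ΔF ΔG Δq Δr := by
  rw [zeta1, ← Real.sqrt_sq (show 0 ≤ eunorm (perturbationVec α₁ α₂ α₃ β₁ β₂ ΔE ΔF ΔG Δq Δr)
    from Real.sqrt_nonneg _)]
  congr 1
  simp only [perturbationVec, eunorm_sumElim_sq, eunorm_smul_sq, eunorm_realify_sq, eunorm_vecM,
    frob_sq_of_isHermitian hE, frob_sq_eq_reM_add_imM]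
  ring

lemma exists_perturbationVec_eq (hα₁ : α₁ ≠ 0) (hα₂ : α₂ ≠ 0) (hα₃ : α₃ ≠ 0) (hβ₁ : β₁ ≠ 0)
    (hβ₂ : β₂ ≠ 0)
    (x : ((SymIdx n ⊕ SkewIdx n) ⊕
      (((Fin n × Fin m) ⊕ (Fin n × Fin m)) ⊕ ((Fin m × Fin m) ⊕ (Fin m × Fin m)))) ⊕
      ((Fin n ⊕ Fin n) ⊕ (Fin m ⊕ Fin m)) → ℝ) :
    ∃ (ΔE : Matrix (Fin n) (Fin n) ℂ) (ΔF : Matrix (Fin m) (Fin n) ℂ)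
      (ΔG : Matrix (Fin m) (Fin m) ℂ) (Δq : Fin n → ℂ) (Δr : Fin m → ℂ),
      ΔE.IsHermitian ∧ perturbationVec α₁ α₂ α₃ β₁ β₂ ΔE ΔF ΔG Δq Δr = x := by
  obtain ⟨ΔE, hE, hS, hK⟩ := exists_isHermitian_vecS_reM_vecSK_imM
    (α₁⁻¹ • (DS n)⁻¹ *ᵥ fun p => x (.inl (.inl (.inl p))))
    (α₁⁻¹ • (DSK n)⁻¹ *ᵥ fun p => x (.inl (.inl (.inr p))))
  obtain ⟨ΔF, hF₁, hF₂⟩ := exists_vecM_reM_vecM_imM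
    (α₂⁻¹ • fun p => x (.inl (.inr (.inl (.inl p)))))
    (α₂⁻¹ • fun p => x (.inl (.inr (.inl (.inr p)))))
  obtain ⟨ΔG, hG₁, hG₂⟩ := exists_vecM_reM_vecM_imM
    (α₃⁻¹ • fun p => x (.inl (.inr (.inr (.inl p)))))
    (α₃⁻¹ • fun p => x (.inl (.inr (.inr (.inr p)))))
  obtain ⟨Δq, hq⟩ := realify_surjective (β₁⁻¹ • fun i => x (.inr (.inl i)))
  obtain ⟨Δr, hr⟩ := realify_surjective (β₂⁻¹ • fun i => x (.inr (.inr i)))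
  refine ⟨ΔE, ΔF, ΔG, Δq, Δr, hE, ?_⟩
  simp only [perturbationVec, hS, hK, hF₁, hF₂, hG₁, hG₂, hq, hr, mulVec_smul,
    mulVec_nonsing_inv_mulVec (isUnit_DS n), mulVec_nonsing_inv_mulVec (isUnit_DSK n), smul_smul,
    mul_inv_cancel₀ hα₁, mul_inv_cancel₀ hα₂, mul_inv_cancel₀ hα₃, mul_inv_cancel₀ hβ₁,
    mul_inv_cancel₀ hβ₂, one_smul]
  ext ((((p | p)) | ((p | p) | (p | p))) | ((i | i) | (i | i))) <;> rfl

lemma add_mulVec_add_conjTranspose_mulVec_eq_iff (E ΔE : Matrix (Fin n) (Fin n) ℂ)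
    (F ΔF : Matrix (Fin m) (Fin n) ℂ) (q Δq : Fin n → ℂ) :
    (E + ΔE) *ᵥ uh + (F + ΔF)ᴴ *ᵥ ph = q + Δq ↔
      ΔE *ᵥ uh + ΔFᴴ *ᵥ ph - Δq = q - E *ᵥ uh - Fᴴ *ᵥ ph := by
  rw [add_mulVec, conjTranspose_add, add_mulVec, add_add_add_eq_add_iff]

lemma add_mulVec_add_mulVec_eq_iff (F ΔF : Matrix (Fin m) (Fin n) ℂ)
    (G ΔG : Matrix (Fin m) (Fin m) ℂ) (r Δr : Fin m → ℂ) :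
    (F + ΔF) *ᵥ uh + (G + ΔG) *ᵥ ph = r + Δr ↔
      ΔF *ᵥ uh + ΔG *ᵥ ph - Δr = r - F *ᵥ uh - G *ᵥ ph := by
  rw [add_mulVec, add_mulVec, add_add_add_eq_add_iff]

lemma backwardErrors_eq_image_eunorm (E : Matrix (Fin n) (Fin n) ℂ) (F : Matrix (Fin m) (Fin n) ℂ)
    (G : Matrix (Fin m) (Fin m) ℂ) (q : Fin n → ℂ) (r : Fin m → ℂ) (hα₁ : α₁ ≠ 0) (hα₂ : α₂ ≠ 0)
    (hα₃ : α₃ ≠ 0) (hβ₁ : β₁ ≠ 0) (hβ₂ : β₂ ≠ 0) :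
    {t : ℝ | ∃ (ΔE : Matrix (Fin n) (Fin n) ℂ) (ΔF : Matrix (Fin m) (Fin n) ℂ)
        (ΔG : Matrix (Fin m) (Fin m) ℂ) (Δq : Fin n → ℂ) (Δr : Fin m → ℂ),
        ΔE.IsHermitian ∧
        (E + ΔE) *ᵥ uh + (F + ΔF)ᴴ *ᵥ ph = q + Δq ∧
        (F + ΔF) *ᵥ uh + (G + ΔG) *ᵥ ph = r + Δr ∧
        t = zeta1 α₁ α₂ α₃ β₁ β₂ ΔE ΔF ΔG Δq Δr} =
      eunorm '' {x | constraintMatrix n m uh ph α₁ α₂ α₃ β₁ β₂ *ᵥ x =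
        Sum.elim (realify (q - E *ᵥ uh - Fᴴ *ᵥ ph)) (realify (r - F *ᵥ uh - G *ᵥ ph))} := by
  ext t
  constructor
  · rintro ⟨ΔE, ΔF, ΔG, Δq, Δr, hE, h₁, h₂, rfl⟩
    refine ⟨_, ?_, eunorm_perturbationVec α₁ α₂ α₃ β₁ β₂ hE ΔF ΔG Δq Δr⟩
    rw [Set.mem_ofPred_eq, constraintMatrix_mulVec_perturbationVec uh ph hα₁ hα₂ hα₃ hβ₁ hβ₂ hE,
      (add_mulVec_add_conjTranspose_mulVec_eq_iff uh ph E ΔE F ΔF q Δq).mp h₁,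
      (add_mulVec_add_mulVec_eq_iff uh ph F ΔF G ΔG r Δr).mp h₂]
  · rintro ⟨x, hx, rfl⟩
    obtain ⟨ΔE, ΔF, ΔG, Δq, Δr, hE, rfl⟩ := exists_perturbationVec_eq hα₁ hα₂ hα₃ hβ₁ hβ₂ x
    rw [Set.mem_ofPred_eq, constraintMatrix_mulVec_perturbationVec uh ph hα₁ hα₂ hα₃ hβ₁ hβ₂ hE,
      Sum.elim_eq_iff] at hx
    exact ⟨ΔE, ΔF, ΔG, Δq, Δr, hE,
      (add_mulVec_add_conjTranspose_mulVec_eq_iff uh ph E ΔE F ΔF q Δq).mpr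
        (realify_injective hx.1),
      (add_mulVec_add_mulVec_eq_iff uh ph F ΔF G ΔG r Δr).mpr (realify_injective hx.2),
      eunorm_perturbationVec α₁ α₂ α₃ β₁ β₂ hE ΔF ΔG Δq Δr⟩

end BackwardError

theorem structured_BE_case_i_no_sparsity_general
    (n m : ℕ) (E : Matrix (Fin n) (Fin n) ℂ)
    (F : Matrix (Fin m) (Fin n) ℂ) (G : Matrix (Fin m) (Fin m) ℂ)
    (q : Fin n → ℂ) (r : Fin m → ℂ) (uh : Fin n → ℂ) (ph : Fin m → ℂ)
    (α₁ α₂ α₃ β₁ β₂ : ℝ)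
    (hα₁ : 0 < α₁) (hα₂ : 0 < α₂) (hα₃ : 0 < α₃) (hβ₁ : 0 < β₁) (hβ₂ : 0 < β₂) :
    let Q : Fin n → ℂ := q - E *ᵥ uh - Fᴴ *ᵥ ph
    let R : Fin m → ℂ := r - F *ᵥ uh - G *ᵥ ph
    let Y₁ : Matrix (Fin n ⊕ Fin n)
        ((SymIdx n ⊕ SkewIdx n) ⊕
          (((Fin n × Fin m) ⊕ (Fin n × Fin m)) ⊕ ((Fin m × Fin m) ⊕ (Fin m × Fin m)))) ℝ :=
      fromCols
        (fromRows
          (fromCols (α₁⁻¹ • (rowKronId (reV uh) * (JS n * (DS n)⁻¹)))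
            ((-(α₁⁻¹)) • (rowKronId (imV uh) * (JSK n * (DSK n)⁻¹))))
          (fromCols (α₁⁻¹ • (rowKronId (imV uh) * (JS n * (DS n)⁻¹)))
            (α₁⁻¹ • (rowKronId (reV uh) * (JSK n * (DSK n)⁻¹)))))
        (fromCols
          (fromRows
            (fromCols (α₂⁻¹ • idKronRow (reV ph)) (α₂⁻¹ • idKronRow (imV ph)))
            (fromCols (α₂⁻¹ • idKronRow (imV ph)) ((-(α₂⁻¹)) • idKronRow (reV ph))))
          0)
    let Y₂ : Matrix (Fin m ⊕ Fin m)
        ((SymIdx n ⊕ SkewIdx n) ⊕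
          (((Fin n × Fin m) ⊕ (Fin n × Fin m)) ⊕ ((Fin m × Fin m) ⊕ (Fin m × Fin m)))) ℝ :=
      fromCols 0
        (fromCols
          (fromRows
            (fromCols (α₂⁻¹ • rowKronId (reV uh)) ((-(α₂⁻¹)) • rowKronId (imV uh)))
            (fromCols (α₂⁻¹ • rowKronId (imV uh)) (α₂⁻¹ • rowKronId (reV uh))))
          (fromRows
            (fromCols (α₃⁻¹ • rowKronId (reV ph)) ((-(α₃⁻¹)) • rowKronId (imV ph)))
            (fromCols (α₃⁻¹ • rowKronId (imV ph)) (α₃⁻¹ • rowKronId (reV ph)))))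
    let I₁ : Matrix (Fin n ⊕ Fin n) ((Fin n ⊕ Fin n) ⊕ (Fin m ⊕ Fin m)) ℝ :=
      fromCols ((-(β₁⁻¹)) • (1 : Matrix (Fin n ⊕ Fin n) (Fin n ⊕ Fin n) ℝ)) 0
    let I₂ : Matrix (Fin m ⊕ Fin m) ((Fin n ⊕ Fin n) ⊕ (Fin m ⊕ Fin m)) ℝ :=
      fromCols 0 ((-(β₂⁻¹)) • (1 : Matrix (Fin m ⊕ Fin m) (Fin m ⊕ Fin m) ℝ))
    let M := fromBlocks Y₁ I₁ Y₂ I₂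
    let w : (Fin n ⊕ Fin n) ⊕ (Fin m ⊕ Fin m) → ℝ :=
      Sum.elim (Sum.elim (reV Q) (imV Q)) (Sum.elim (reV R) (imV R))
    IsUnit (M * Mᵀ) ∧
      IsLeast
        {t : ℝ | ∃ (ΔE : Matrix (Fin n) (Fin n) ℂ) (ΔF : Matrix (Fin m) (Fin n) ℂ)
            (ΔG : Matrix (Fin m) (Fin m) ℂ) (Δq : Fin n → ℂ) (Δr : Fin m → ℂ),
            ΔE.IsHermitian ∧
            (E + ΔE) *ᵥ uh + (F + ΔF)ᴴ *ᵥ ph = q + Δq ∧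
            (F + ΔF) *ᵥ uh + (G + ΔG) *ᵥ ph = r + Δr ∧
            t = zeta1 α₁ α₂ α₃ β₁ β₂ ΔE ΔF ΔG Δq Δr}
        (eunorm ((Mᵀ * (M * Mᵀ)⁻¹) *ᵥ w)) := by
  intro Q R Y₁ Y₂ I₁ I₂ M w
  have hM : IsUnit (M * Mᵀ) :=
    isUnit_constraintMatrix_mul_transpose uh ph α₁ α₂ α₃ hβ₁.ne' hβ₂.ne'
  refine ⟨hM, ?_⟩
  rw [backwardErrors_eq_image_eunorm uh ph E F G q r hα₁.ne' hα₂.ne' hα₃.ne' hβ₁.ne' hβ₂.ne']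
  exact isLeast_eunorm_of_mulVec_eq M w hM

/-- Corollary 3.3: structured backward error for case (i)
without preserving sparsity. -/
theorem structured_BE_case_i_no_sparsity
    (n m : ℕ) (E : Matrix (Fin n) (Fin n) ℂ) (hE : E.IsHermitian)
    (F : Matrix (Fin m) (Fin n) ℂ) (G : Matrix (Fin m) (Fin m) ℂ)
    (q : Fin n → ℂ) (r : Fin m → ℂ) (uh : Fin n → ℂ) (ph : Fin m → ℂ)
    (α₁ α₂ α₃ β₁ β₂ : ℝ)
    (hα₁ : 0 < α₁) (hα₂ : 0 < α₂) (hα₃ : 0 < α₃) (hβ₁ : 0 < β₁) (hβ₂ : 0 < β₂) :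
    let Q : Fin n → ℂ := q - E *ᵥ uh - Fᴴ *ᵥ ph
    let R : Fin m → ℂ := r - F *ᵥ uh - G *ᵥ ph
    let Y₁ : Matrix (Fin n ⊕ Fin n)
        ((SymIdx n ⊕ SkewIdx n) ⊕
          (((Fin n × Fin m) ⊕ (Fin n × Fin m)) ⊕ ((Fin m × Fin m) ⊕ (Fin m × Fin m)))) ℝ :=
      fromCols
        (fromRows
          (fromCols (α₁⁻¹ • (rowKronId (reV uh) * (JS n * (DS n)⁻¹)))
            ((-(α₁⁻¹)) • (rowKronId (imV uh) * (JSK n * (DSK n)⁻¹))))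
          (fromCols (α₁⁻¹ • (rowKronId (imV uh) * (JS n * (DS n)⁻¹)))
            (α₁⁻¹ • (rowKronId (reV uh) * (JSK n * (DSK n)⁻¹)))))
        (fromCols
          (fromRows
            (fromCols (α₂⁻¹ • idKronRow (reV ph)) (α₂⁻¹ • idKronRow (imV ph)))
            (fromCols (α₂⁻¹ • idKronRow (imV ph)) ((-(α₂⁻¹)) • idKronRow (reV ph))))
          0)
    let Y₂ : Matrix (Fin m ⊕ Fin m)
        ((SymIdx n ⊕ SkewIdx n) ⊕
          (((Fin n × Fin m) ⊕ (Fin n × Fin m)) ⊕ ((Fin m × Fin m) ⊕ (Fin m × Fin m)))) ℝ :=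
      fromCols 0
        (fromCols
          (fromRows
            (fromCols (α₂⁻¹ • rowKronId (reV uh)) ((-(α₂⁻¹)) • rowKronId (imV uh)))
            (fromCols (α₂⁻¹ • rowKronId (imV uh)) (α₂⁻¹ • rowKronId (reV uh))))
          (fromRows
            (fromCols (α₃⁻¹ • rowKronId (reV ph)) ((-(α₃⁻¹)) • rowKronId (imV ph)))
            (fromCols (α₃⁻¹ • rowKronId (imV ph)) (α₃⁻¹ • rowKronId (reV ph)))))
    let I₁ : Matrix (Fin n ⊕ Fin n) ((Fin n ⊕ Fin n) ⊕ (Fin m ⊕ Fin m)) ℝ :=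
      fromCols ((-(β₁⁻¹)) • (1 : Matrix (Fin n ⊕ Fin n) (Fin n ⊕ Fin n) ℝ)) 0
    let I₂ : Matrix (Fin m ⊕ Fin m) ((Fin n ⊕ Fin n) ⊕ (Fin m ⊕ Fin m)) ℝ :=
      fromCols 0 ((-(β₂⁻¹)) • (1 : Matrix (Fin m ⊕ Fin m) (Fin m ⊕ Fin m) ℝ))
    let M := fromBlocks Y₁ I₁ Y₂ I₂
    let w : (Fin n ⊕ Fin n) ⊕ (Fin m ⊕ Fin m) → ℝ :=
      Sum.elim (Sum.elim (reV Q) (imV Q)) (Sum.elim (reV R) (imV R))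
    IsUnit (M * Mᵀ) ∧
      IsLeast
        {t : ℝ | ∃ (ΔE : Matrix (Fin n) (Fin n) ℂ) (ΔF : Matrix (Fin m) (Fin n) ℂ)
            (ΔG : Matrix (Fin m) (Fin m) ℂ) (Δq : Fin n → ℂ) (Δr : Fin m → ℂ),
            ΔE.IsHermitian ∧
            (E + ΔE) *ᵥ uh + (F + ΔF)ᴴ *ᵥ ph = q + Δq ∧
            (F + ΔF) *ᵥ uh + (G + ΔG) *ᵥ ph = r + Δr ∧
            t = zeta1 α₁ α₂ α₃ β₁ β₂ ΔE ΔF ΔG Δq Δr}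
        (eunorm ((Mᵀ * (M * Mᵀ)⁻¹) *ᵥ w)) :=
  structured_BE_case_i_no_sparsity_general n m E F G q r uh ph α₁ α₂ α₃ β₁ β₂ hα₁ hα₂ hα₃ hβ₁ hβ₂

end GSPPBE
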